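/- Let G be a directed graph on the vertex set {1,…,N} with neighbor sets N_κ, let N_max := max_κ |N_κ| ≥ 1, and for each vertex κ let f_κ : ℝⁿ × (ℝⁿ)^{N_κ} → ℝⁿ satisfy: |f_κ(x, b)| ≤ M for all arguments, |f_κ(x, b) − f_κ(x, b')| ≤ L₁ |b − b'|, and |f_κ(x, b) − f_κ(x', b)| ≤ L₂ |x − x'|, with constants M, L₁, L₂ > 0. Fix m ≥ 1, assign to each vertex κ an initial point x_{κ,G} ∈ ℝⁿ, fix a vertex i and a neighbor ℓ ∈ N_i, and assume the initial points used for i and for ℓ agree on N̄_i^m ∩ N̄_ℓ^m (consistent cell configurations). Let (χ_κ^{[i]}) and (χ_κ^{[ℓ]}) denote the reference solutions associated with i and ℓ respectively (per Definition of reference trajectories: if N_i^{m+1} = ∅ these solve χ̇_κ = f_κ(χ_κ, (χ_j)_{j∈N_κ}) for κ ∈ N̄_i^m with χ_κ(0) = x_{κ,G}; if N_i^{m+1} ≠ ∅ they solve this system only for κ ∈ N̄_i^{m−1}, with χ_κ(t) := x_{κ,G} held constant for κ ∈ N_i^m; and analogously for ℓ). Let t* be the unique positive solution of e^{L₂ t}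 − (L₂ + L₂²/(L₁ √N_max)) t − 1 = 0. Then for every κ ∈ N̄_ℓ^{m−1} it holds |χ_κ^{[i]}(t) − χ_κ^{[ℓ]}(t)| ≤ M t for all t ∈ [0, t*]. -/

import Mathlib

/-- `hasPath E m j i` : there is a directed path of length `m` from `j` to `i`. -/
def hasPath {V : Type*} (E : V → V → Prop) : ℕ → V → V → Prop
  | 0, j, i => j = i
  | (n + 1), j, i => ∃ k, E j k ∧ hasPath E n k i

/-- The neighbor set `N_i` of `i` : vertices `j ≠ i` with an edge `(j, i)`. -/
def nbr {V : Type*} (E : V → V → Prop) (i : V) : Set V := {j | j ≠ i ∧ E j i}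

/-- `nset E i m` = `N_i^m` : for `m ≥ 1`, the vertices `j ≠ i` from which `i` is
reachable by a path of length `m` but by no shorter path; `N_i^0 = {i}`. -/
def nset {V : Type*} (E : V → V → Prop) (i : V) : ℕ → Set V
  | 0 => {i}
  | (m + 1) => {j | j ≠ i ∧ hasPath E (m + 1) j i ∧ ∀ k < m + 1, ¬ hasPath E k j i}

/-- The `m`-neighbor set `N̄_i^m = ⋃_{k ≤ m} N_i^k` of `i`. -/
def nbar {V : Type*} (E : V → V → Prop) (i : V) (m : ℕ) : Set V :=
  ⋃ k ∈ Set.Iic m, nset E i k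

/-- The neighbors of `κ` as a finset. -/
def nbrFinset {Nv : ℕ} (E : Fin Nv → Fin Nv → Prop) [DecidableRel E] (κ : Fin Nv) :
    Finset (Fin Nv) :=
  Finset.univ.filter fun j => j ≠ κ ∧ E j κ

/-!
On `C = N̄_i^m ∩ N̄_ℓ^m` both families start at the same points and every agent moves with speed at
most `M`, so an agent frozen in one family deviates by at most `M t`. An agent moving in both
families has all its neighbours in `C`; if every deviation on `[0, T)` is at most `A M s`, the
Lipschitz bounds give `‖δ'‖ ≤ L₂ ‖δ‖ + L₁ √N_max A M s`, and Gronwall yields `‖δ(t)‖ ≤ A θ_T M t`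
with `θ_T = L₁ √N_max (e^{L₂T} - L₂T - 1) / (L₂² T)`. Strict convexity of `exp` makes `θ_T < 1`
for `T < t*`, while `θ_{t*} = 1` by the choice of `t*`. Iterating from the trivial bound `2 M t`
gives `M t` on every `[0, T]` with `T < t*`, and one more step reaches `t*`.
-/

open Set Real

section Graph

variable {V : Type*} {E : V → V → Prop} {i j κ ℓ : V} {r : ℕ}

lemma hasPath_add {a b : ℕ} {j k i : V} (h₁ : hasPath E a j k) (h₂ : hasPath E b k i) :
    hasPath E (a + b) j i := by
  induction a generalizing j with
  | zero => obtain rfl : j = k := h₁; simpa using h₂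
  | succ a ih =>
    obtain ⟨k', hjk', hk'⟩ := h₁
    rw [Nat.succ_add]
    exact ⟨k', hjk', ih hk'⟩

lemma mem_nset_iff {k : ℕ} :
    j ∈ nset E i k ↔ hasPath E k j i ∧ ∀ k' < k, ¬ hasPath E k' j i := by
  cases k with
  | zero => simp [nset, hasPath]
  | succ k =>
    refine ⟨fun h => h.2, fun h => ⟨?_, h⟩⟩
    rintro rfl
    exact h.2 0 k.succ_pos rfl

lemma mem_nbar_iff : j ∈ nbar E i r ↔ ∃ k ≤ r, hasPath E k j i := by
  classical
  simp only [nbar, mem_iUnion, mem_Iic, mem_nset_iff, exists_prop]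
  constructor
  · rintro ⟨k, hk, hp, -⟩
    exact ⟨k, hk, hp⟩
  · rintro ⟨k, hk, hp⟩
    have hex : ∃ k, hasPath E k j i := ⟨k, hp⟩
    exact ⟨Nat.find hex, (Nat.find_min' hex hp).trans hk, Nat.find_spec hex,
      fun _ => Nat.find_min hex⟩

lemma nbar_mono {r r' : ℕ} (h : r ≤ r') : nbar E i r ⊆ nbar E i r' :=
  biUnion_subset_biUnion_left (Iic_subset_Iic.2 h)

lemma nbar_succ : nbar E i (r + 1) = nbar E i r ∪ nset E i (r + 1) := by
  ext j
  simp only [nbar, mem_union, mem_iUnion, mem_Iic, exists_prop]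
  constructor
  · rintro ⟨k, hk, hj⟩
    rcases Nat.le_succ_iff.1 hk with hk | rfl
    · exact Or.inl ⟨k, hk, hj⟩
    · exact Or.inr hj
  · rintro (⟨k, hk, hj⟩ | hj)
    · exact ⟨k, hk.trans r.le_succ, hj⟩
    · exact ⟨r + 1, le_rfl, hj⟩

lemma mem_nbar_succ_of_mem (hκ : κ ∈ nbar E i r) (hj : E j κ) : j ∈ nbar E i (r + 1) := by
  obtain ⟨k, hk, hp⟩ := mem_nbar_iff.1 hκ
  exact mem_nbar_iff.2 ⟨1 + k, by omega, hasPath_add ⟨κ, hj, rfl⟩ hp⟩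

lemma nbar_subset_nbar_succ_of_mem_nbr (hℓ : ℓ ∈ nbr E i) : nbar E ℓ r ⊆ nbar E i (r + 1) := by
  intro κ hκ
  obtain ⟨k, hk, hp⟩ := mem_nbar_iff.1 hκ
  exact mem_nbar_iff.2 ⟨k + 1, by omega, hasPath_add hp ⟨i, hℓ.2, rfl⟩⟩

end Graph

lemma strictMonoOn_exp_sub_mul_sub_one_div {K : ℝ} (hK : 0 < K) :
    StrictMonoOn (fun t => (exp (K * t) - K * t - 1) / t) (Ioi 0) := by
  intro a (ha : 0 < a) b (hb : 0 < b) hab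
  have key := strictConvexOn_exp.secant_strict_mono (mem_univ 0) (mem_univ (K * a))
    (mem_univ (K * b)) (by positivity) (by positivity) (by gcongr)
  simp only [exp_zero, sub_zero] at key
  have e : ∀ t, 0 < t → (exp (K * t) - K * t - 1) / t = K * ((exp (K * t) - 1) / (K * t)) - K := by
    intro t ht
    field_simp
    ring
  simp only [e a ha, e b hb]
  gcongr

lemma exp_sub_mul_sub_one_le {K t T : ℝ} (hK : 0 < K) (ht : 0 ≤ t) (htT : t ≤ T) :
    exp (K * t) - K * t - 1 ≤ (exp (K * T) - K * T - 1) / T * t := by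
  rcases ht.eq_or_lt with rfl | ht
  · simp
  have := (strictMonoOn_exp_sub_mul_sub_one_div hK).monotoneOn ht (ht.trans_le htT) htT
  rwa [div_le_iff₀ ht] at this

lemma norm_le_of_norm_deriv_right_le_mul_add {F : Type*} [NormedAddCommGroup F] [NormedSpace ℝ F]
    {δ δ' : ℝ → F} {K c b : ℝ} (hK : 0 < K) (hcont : ContinuousOn δ (Icc 0 b))
    (hderiv : ∀ t ∈ Ico 0 b, HasDerivWithinAt δ (δ' t) (Ici t) t) (h0 : δ 0 = 0)
    (hbound : ∀ t ∈ Ico 0 b, ‖δ' t‖ ≤ K * ‖δ t‖ + c * t) :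
    ∀ t ∈ Icc 0 b, ‖δ t‖ ≤ c / K ^ 2 * (exp (K * t) - K * t - 1) := by
  -- the fence below outgrows what `hbound` allows at a contact point, by the margin `εK e^{2Kt}`
  have fence : ∀ ε > 0, ∀ t ∈ Icc 0 b,
      ‖δ t‖ ≤ c / K ^ 2 * (exp (K * t) - K * t - 1) + ε * exp (2 * K * t) := by
    intro ε hε
    have hB : ∀ t, HasDerivAt
        (fun s => c / K ^ 2 * (exp (K * s) - K * s - 1) + ε * exp (2 * K * s))
        (c / K * (exp (K * t) - 1) + ε * (2 * K * exp (2 * K * t))) t := by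
      intro t
      have hlin : ∀ a : ℝ, HasDerivAt (fun s => a * s) a t := fun a => by
        simpa using (hasDerivAt_id t).const_mul a
      refine (((((hlin K).exp.sub (hlin K)).sub_const 1).const_mul (c / K ^ 2)).add
        ((hlin (2 * K)).exp.const_mul ε)).congr_deriv ?_
      field_simp
    refine image_norm_le_of_norm_deriv_right_lt_deriv_boundary hcont hderiv
      (by simp [h0, hε.le]) hB fun t ht hδt => ?_
    have e : K * (c / K ^ 2 * (exp (K * t) - K * t - 1) + ε * exp (2 * K * t)) + c * t
        = c / K * (exp (K * t) - 1) + ε * K * exp (2 * K * t) := by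
      field_simp
      ring
    have hgap : 0 < ε * K * exp (2 * K * t) := by positivity
    calc ‖δ' t‖ ≤ K * ‖δ t‖ + c * t := hbound t ht
      _ = c / K * (exp (K * t) - 1) + ε * K * exp (2 * K * t) := by rw [hδt, e]
      _ < _ := by linarith
  intro t ht
  refine le_of_forall_pos_le_add fun η hη => ?_
  have := fence (η / exp (2 * K * t)) (by positivity) t ht
  rwa [div_mul_cancel₀ _ (exp_pos _).ne'] at this

lemma bootstrap_max_one_mul {P : ℝ → Prop} {θ : ℝ} (hθ₀ : 0 ≤ θ) (hθ₁ : θ < 1) (h₂ : P 2)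
    (hstep : ∀ A, 0 ≤ A → P A → P (max 1 (θ * A))) : P 1 := by
  have hiter : ∀ k : ℕ, P (max 1 (2 * θ ^ k)) := by
    intro k
    induction k with
    | zero => simpa using h₂
    | succ k ih =>
      have := hstep _ (zero_le_one.trans (le_max_left _ _)) ih
      rwa [mul_max_of_nonneg _ _ hθ₀, ← max_assoc, mul_one, max_eq_left hθ₁.le,
        mul_left_comm, ← pow_succ'] at this
  obtain ⟨k, hk⟩ := exists_pow_lt_of_lt_one (by norm_num : (0:ℝ) < 1 / 2) hθ₁
  simpa [max_eq_left (by linarith : 2 * θ ^ k ≤ 1)] using hiter k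

section Network

variable {V F : Type*} [NormedAddCommGroup F] [NormedSpace ℝ F]

def SolvesAt (f : V → F → (V → F) → F) (χ : V → ℝ → F) (κ : V) : Prop :=
  ∀ t ∈ Ici (0:ℝ), HasDerivWithinAt (χ κ) (f κ (χ κ t) fun j => χ j t) (Ici 0) t

def IsReferenceTrajectory (E : V → V → Prop) (f : V → F → (V → F) → F) (m : ℕ) (i : V)
    (x₀ : V → F) (χ : V → ℝ → F) : Prop :=
  (nset E i (m + 1) = ∅ →
    (∀ κ ∈ nbar E i m, χ κ 0 = x₀ κ) ∧ ∀ κ ∈ nbar E i m, SolvesAt f χ κ) ∧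
  (nset E i (m + 1) ≠ ∅ →
    (∀ κ ∈ nbar E i (m - 1), χ κ 0 = x₀ κ) ∧ (∀ κ ∈ nbar E i (m - 1), SolvesAt f χ κ) ∧
      ∀ κ ∈ nset E i m, ∀ t, χ κ t = x₀ κ)

def FrozenOrSolvingOn (E : V → V → Prop) (f : V → F → (V → F) → F) (S : Set V) (x₀ : V → F)
    (χ : V → ℝ → F) : Prop :=
  ∀ κ ∈ S, (∀ t, χ κ t = x₀ κ) ∨ (χ κ 0 = x₀ κ ∧ SolvesAt f χ κ ∧ ∀ j, E j κ → j ∈ S)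

variable {E : V → V → Prop} {f : V → F → (V → F) → F} {χ χ' : V → ℝ → F} {x₀ x₀' : V → F}
  {S S' : Set V} {κ : V} {M t : ℝ}

lemma IsReferenceTrajectory.frozenOrSolvingOn {m : ℕ} {i : V}
    (h : IsReferenceTrajectory E f m i x₀ χ) (hm : 1 ≤ m) :
    FrozenOrSolvingOn E f (nbar E i m) x₀ χ := by
  intro κ hκ
  by_cases hempty : nset E i (m + 1) = ∅
  · obtain ⟨h0, hsol⟩ := h.1 hempty
    refine Or.inr ⟨h0 κ hκ, hsol κ hκ, fun j hj => ?_⟩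
    simpa [nbar_succ, hempty] using mem_nbar_succ_of_mem hκ hj
  · obtain ⟨h0, hsol, hfrozen⟩ := h.2 hempty
    obtain ⟨m, rfl⟩ : ∃ m', m = m' + 1 := ⟨m - 1, by omega⟩
    rw [Nat.add_sub_cancel] at h0 hsol
    rcases nbar_succ ▸ hκ with hκ | hκ
    · exact Or.inr ⟨h0 κ hκ, hsol κ hκ, fun j hj => mem_nbar_succ_of_mem hκ hj⟩
    · exact Or.inl (hfrozen κ hκ)

lemma SolvesAt.continuousOn (h : SolvesAt f χ κ) : ContinuousOn (χ κ) (Ici 0) :=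
  fun t ht => (h t ht).continuousWithinAt

lemma SolvesAt.norm_sub_initial_le (h : SolvesAt f χ κ) (hbound : ∀ x b, ‖f κ x b‖ ≤ M)
    (ht : 0 ≤ t) :
    ‖χ κ t - χ κ 0‖ ≤ M * t := by
  simpa using norm_image_sub_le_of_norm_deriv_le_segment'
    (fun s hs => (h s hs.1).mono Icc_subset_Ici_self) (fun s _ => hbound _ _) t ⟨ht, le_rfl⟩

lemma FrozenOrSolvingOn.norm_sub_initial_le (h : FrozenOrSolvingOn E f S x₀ χ)
    (hbound : ∀ x b, ‖f κ x b‖ ≤ M) (hM : 0 ≤ M) (hκ : κ ∈ S) (ht : 0 ≤ t) :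
    ‖χ κ t - x₀ κ‖ ≤ M * t := by
  rcases h κ hκ with hfrozen | ⟨h0, hsol, -⟩
  · simpa [hfrozen t] using mul_nonneg hM ht
  · simpa [h0] using hsol.norm_sub_initial_le hbound ht

lemma FrozenOrSolvingOn.norm_sub_le_two_mul (h : FrozenOrSolvingOn E f S x₀ χ)
    (h' : FrozenOrSolvingOn E f S' x₀' χ') (hbound : ∀ x b, ‖f κ x b‖ ≤ M) (hM : 0 ≤ M)
    (hκ : κ ∈ S ∩ S') (hx : x₀ κ = x₀' κ) (ht : 0 ≤ t) :
    ‖χ κ t - χ' κ t‖ ≤ 2 * M * t := by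
  calc ‖χ κ t - χ' κ t‖ = ‖(χ κ t - x₀ κ) - (χ' κ t - x₀' κ)‖ := by rw [hx]; abel_nf
    _ ≤ M * t + M * t := (norm_sub_le _ _).trans (add_le_add
      (h.norm_sub_initial_le hbound hM hκ.1 ht) (h'.norm_sub_initial_le hbound hM hκ.2 ht))
    _ = 2 * M * t := by ring

lemma FrozenOrSolvingOn.norm_sub_le_or_solvesAt (h : FrozenOrSolvingOn E f S x₀ χ)
    (h' : FrozenOrSolvingOn E f S' x₀' χ') (hbound : ∀ x b, ‖f κ x b‖ ≤ M) (hM : 0 ≤ M)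
    (hκ : κ ∈ S ∩ S') (hx : x₀ κ = x₀' κ) :
    (∀ t, 0 ≤ t → ‖χ κ t - χ' κ t‖ ≤ M * t) ∨
      (χ κ 0 = χ' κ 0 ∧ SolvesAt f χ κ ∧ SolvesAt f χ' κ ∧ ∀ j, E j κ → j ∈ S ∩ S') := by
  rcases h κ hκ.1 with hfrozen | ⟨h0, hsol, hnbr⟩
  · refine Or.inl fun t ht => ?_
    rw [hfrozen t, hx, ← norm_neg, neg_sub]
    exact h'.norm_sub_initial_le hbound hM hκ.2 ht
  rcases h' κ hκ.2 with hfrozen' | ⟨h0', hsol', hnbr'⟩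
  · refine Or.inl fun t ht => ?_
    rw [hfrozen' t, ← hx]
    exact h.norm_sub_initial_le hbound hM hκ.1 ht
  · exact Or.inr ⟨by rw [h0, h0', hx], hsol, hsol', fun j hj => ⟨hnbr j hj, hnbr' j hj⟩⟩

end Network

section Coupling

variable {Nv : ℕ} {E : Fin Nv → Fin Nv → Prop} [DecidableRel E] {F : Type*}
  [NormedAddCommGroup F] {f : Fin Nv → F → (Fin Nv → F) → F}
  {κ : Fin Nv} {L₁ L₂ : ℝ} {N : ℕ}

lemma norm_sub_le_of_lipschitz (hLip1 : ∀ x b b', ‖f κ x b - f κ x b'‖ ≤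
      L₁ * √(∑ j ∈ nbrFinset E κ, ‖b j - b' j‖ ^ 2))
    (hLip2 : ∀ x x' b, ‖f κ x b - f κ x' b‖ ≤ L₂ * ‖x - x'‖) (hL₁ : 0 ≤ L₁)
    (hcard : (nbrFinset E κ).card ≤ N) {x x' : F} {b b' : Fin Nv → F} {r : ℝ} (hr : 0 ≤ r)
    (hb : ∀ j ∈ nbrFinset E κ, ‖b j - b' j‖ ≤ r) :
    ‖f κ x b - f κ x' b'‖ ≤ L₂ * ‖x - x'‖ + L₁ * √N * r := by
  have hsum : ∑ j ∈ nbrFinset E κ, ‖b j - b' j‖ ^ 2 ≤ N * r ^ 2 := by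
    calc ∑ j ∈ nbrFinset E κ, ‖b j - b' j‖ ^ 2 ≤ ∑ _j ∈ nbrFinset E κ, r ^ 2 :=
          Finset.sum_le_sum fun j hj => pow_le_pow_left₀ (norm_nonneg _) (hb j hj) 2
      _ ≤ N * r ^ 2 := by
          rw [Finset.sum_const, nsmul_eq_mul]
          gcongr
  have hsqrt : √(∑ j ∈ nbrFinset E κ, ‖b j - b' j‖ ^ 2) ≤ √N * r := by
    simpa [Real.sqrt_mul (Nat.cast_nonneg N), Real.sqrt_sq hr] using Real.sqrt_le_sqrt hsum
  calc ‖f κ x b - f κ x' b'‖ ≤ ‖f κ x b - f κ x b'‖ + ‖f κ x b' - f κ x' b'‖ :=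
        norm_sub_le_norm_sub_add_norm_sub _ _ _
    _ ≤ L₁ * (√N * r) + L₂ * ‖x - x'‖ :=
        add_le_add ((hLip1 x b b').trans (by gcongr)) (hLip2 x x' b')
    _ = L₂ * ‖x - x'‖ + L₁ * √N * r := by ring

lemma norm_sub_le_of_solvesAt [NormedSpace ℝ F] (hLip1 : ∀ x b b', ‖f κ x b - f κ x b'‖ ≤
      L₁ * √(∑ j ∈ nbrFinset E κ, ‖b j - b' j‖ ^ 2))
    (hLip2 : ∀ x x' b, ‖f κ x b - f κ x' b‖ ≤ L₂ * ‖x - x'‖) (hL₁ : 0 ≤ L₁) (hL₂ : 0 < L₂)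
    (hcard : (nbrFinset E κ).card ≤ N) {χ χ' : Fin Nv → ℝ → F} (hχ : SolvesAt f χ κ)
    (hχ' : SolvesAt f χ' κ) (h0 : χ κ 0 = χ' κ 0) {R T : ℝ} (hR : 0 ≤ R)
    (hnbr : ∀ j ∈ nbrFinset E κ, ∀ s ∈ Ico 0 T, ‖χ j s - χ' j s‖ ≤ R * s) :
    ∀ t ∈ Icc 0 T, ‖χ κ t - χ' κ t‖ ≤
      L₁ * √N * R / L₂ ^ 2 * (exp (L₂ * t) - L₂ * t - 1) := by
  refine norm_le_of_norm_deriv_right_le_mul_add hL₂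
    ((hχ.continuousOn.sub hχ'.continuousOn).mono Icc_subset_Ici_self)
    (fun s hs => ((hχ s hs.1).sub (hχ' s hs.1)).mono (Ici_subset_Ici.2 hs.1))
    (sub_eq_zero.2 h0) fun s hs => ?_
  calc _ ≤ L₂ * ‖χ κ s - χ' κ s‖ + L₁ * √N * (R * s) :=
        norm_sub_le_of_lipschitz hLip1 hLip2 hL₁ hcard (mul_nonneg hR hs.1)
          fun j hj => hnbr j hj s hs
    _ = L₂ * ‖χ κ s - χ' κ s‖ + L₁ * √N * R * s := by ring

variable [NormedSpace ℝ F] {S S' : Set (Fin Nv)} {x₀ x₀' : Fin Nv → F} {χ χ' : Fin Nv → ℝ → F}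
  {M : ℝ}

lemma FrozenOrSolvingOn.norm_sub_le_max_one_mul (h : FrozenOrSolvingOn E f S x₀ χ)
    (h' : FrozenOrSolvingOn E f S' x₀' χ') (hx : ∀ κ ∈ S ∩ S', x₀ κ = x₀' κ)
    (hL₁ : 0 < L₁) (hL₂ : 0 < L₂) (hM : 0 ≤ M) (hbound : ∀ κ x b, ‖f κ x b‖ ≤ M)
    (hLip1 : ∀ κ x b b', ‖f κ x b - f κ x b'‖ ≤
      L₁ * √(∑ j ∈ nbrFinset E κ, ‖b j - b' j‖ ^ 2))
    (hLip2 : ∀ κ x x' b, ‖f κ x b - f κ x' b‖ ≤ L₂ * ‖x - x'‖)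
    (hcard : ∀ κ, (nbrFinset E κ).card ≤ N) {A T : ℝ} (hA : 0 ≤ A)
    (hprev : ∀ j ∈ S ∩ S', ∀ s ∈ Ico 0 T, ‖χ j s - χ' j s‖ ≤ A * (M * s)) :
    ∀ κ ∈ S ∩ S', ∀ t ∈ Icc 0 T, ‖χ κ t - χ' κ t‖ ≤
      max 1 (L₁ * √N / L₂ ^ 2 * ((exp (L₂ * T) - L₂ * T - 1) / T) * A) * (M * t) := by
  intro κ hκ t ht
  have hMt : 0 ≤ M * t := mul_nonneg hM ht.1
  rcases h.norm_sub_le_or_solvesAt h' (hbound κ) hM hκ (hx κ hκ) with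
    hfrozen | ⟨h0, hχ, hχ', hnbr⟩
  · exact (hfrozen t ht.1).trans (le_mul_of_one_le_left hMt (le_max_left _ _))
  calc ‖χ κ t - χ' κ t‖ ≤ L₁ * √N * (A * M) / L₂ ^ 2 * (exp (L₂ * t) - L₂ * t - 1) :=
        norm_sub_le_of_solvesAt (hLip1 κ) (hLip2 κ) hL₁.le hL₂ (hcard κ) hχ hχ' h0
          (mul_nonneg hA hM) (fun j hj s hs => (hprev j (hnbr j (Finset.mem_filter.1 hj).2.2)
            s hs).trans_eq (by ring)) t ht
    _ ≤ L₁ * √N * (A * M) / L₂ ^ 2 * ((exp (L₂ * T) - L₂ * T - 1) / T * t) := by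
        gcongr
        exact exp_sub_mul_sub_one_le hL₂ ht.1 ht.2
    _ = L₁ * √N / L₂ ^ 2 * ((exp (L₂ * T) - L₂ * T - 1) / T) * A * (M * t) := by ring
    _ ≤ _ := by gcongr; exact le_max_right _ _

theorem FrozenOrSolvingOn.norm_sub_le_mul {tstar : ℝ} (h : FrozenOrSolvingOn E f S x₀ χ)
    (h' : FrozenOrSolvingOn E f S' x₀' χ') (hx : ∀ κ ∈ S ∩ S', x₀ κ = x₀' κ)
    (hL₁ : 0 < L₁) (hL₂ : 0 < L₂) (hM : 0 ≤ M) (hN : 0 < N)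
    (hbound : ∀ κ x b, ‖f κ x b‖ ≤ M)
    (hLip1 : ∀ κ x b b', ‖f κ x b - f κ x b'‖ ≤
      L₁ * √(∑ j ∈ nbrFinset E κ, ‖b j - b' j‖ ^ 2))
    (hLip2 : ∀ κ x x' b, ‖f κ x b - f κ x' b‖ ≤ L₂ * ‖x - x'‖)
    (hcard : ∀ κ, (nbrFinset E κ).card ≤ N) (htpos : 0 < tstar)
    (hroot : exp (L₂ * tstar) - (L₂ + L₂ ^ 2 / (L₁ * √N)) * tstar - 1 = 0) :
    ∀ κ ∈ S ∩ S', ∀ t ∈ Icc 0 tstar, ‖χ κ t - χ' κ t‖ ≤ M * t := by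
  set θ : ℝ → ℝ := fun T => L₁ * √N / L₂ ^ 2 * ((exp (L₂ * T) - L₂ * T - 1) / T)
  have improve := fun {A T : ℝ} => h.norm_sub_le_max_one_mul h' hx hL₁ hL₂ hM hbound hLip1
    hLip2 hcard (A := A) (T := T)
  have hθ_nonneg : ∀ T, 0 < T → 0 ≤ θ T := fun T hT =>
    mul_nonneg (by positivity) (div_nonneg (by linarith [add_one_le_exp (L₂ * T)]) hT.le)
  have hθ_root : θ tstar = 1 := by
    show L₁ * √N / L₂ ^ 2 * ((exp (L₂ * tstar) - L₂ * tstar - 1) / tstar) = 1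
    rw [show exp (L₂ * tstar) - L₂ * tstar - 1 = L₂ ^ 2 / (L₁ * √N) * tstar by linarith]
    field_simp
  have hθ_lt : ∀ T ∈ Ioo 0 tstar, θ T < 1 := fun T hT => by
    rw [← hθ_root]
    exact mul_lt_mul_of_pos_left
      (strictMonoOn_exp_sub_mul_sub_one_div hL₂ hT.1 htpos hT.2) (by positivity)
  have hbelow : ∀ T ∈ Ioo 0 tstar, ∀ κ ∈ S ∩ S', ∀ t ∈ Icc 0 T,
      ‖χ κ t - χ' κ t‖ ≤ 1 * (M * t) := fun T hT =>
    bootstrap_max_one_mul (P := fun A => ∀ κ ∈ S ∩ S', ∀ t ∈ Icc 0 T,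
        ‖χ κ t - χ' κ t‖ ≤ A * (M * t)) (hθ_nonneg T hT.1) (hθ_lt T hT)
      (fun κ hκ t ht => (h.norm_sub_le_two_mul h' (hbound κ) hM hκ (hx κ hκ) ht.1).trans_eq
        (by ring))
      fun A hA hP => improve hA fun j hj s hs => hP j hj s (Ico_subset_Icc_self hs)
  have hIco : ∀ j ∈ S ∩ S', ∀ s ∈ Ico 0 tstar, ‖χ j s - χ' j s‖ ≤ 1 * (M * s) :=
    fun j hj s hs => hbelow ((s + tstar) / 2) ⟨by linarith [hs.1, hs.2], by linarith [hs.2]⟩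
      j hj s ⟨hs.1, by linarith [hs.2]⟩
  intro κ hκ t ht
  simpa [θ, hθ_root] using improve zero_le_one hIco κ hκ t ht

end Coupling

/-- Worst-case deviation of the reference-trajectory estimates for a neighbor
`ℓ ∈ N_i` (Lemma on reference trajectory worst-case deviation): for consistent
cell configurations, `|χ_κ^{[i]}(t) − χ_κ^{[ℓ]}(t)| ≤ M t` for all
`κ ∈ N̄_ℓ^{m−1}` and `t ∈ [0, t*]`, where `t*` is the unique positive root of
`e^{L₂ t} − (L₂ + L₂²/(L₁ √N_max)) t − 1 = 0`.  The reference solutions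
`χ^{[i]}, χ^{[ℓ]}` are per the Definition of reference trajectories: if
`N_i^{m+1} = ∅` they solve the coupled system on `N̄_i^m`, else they solve it on
`N̄_i^{m−1}` with the agents in `N_i^m` held fixed at their initial points. -/
theorem stmt17 (Nv n : ℕ) (E : Fin Nv → Fin Nv → Prop) [DecidableRel E]
    (f : Fin Nv → EuclideanSpace ℝ (Fin n) → (Fin Nv → EuclideanSpace ℝ (Fin n)) →
      EuclideanSpace ℝ (Fin n))
    (L₁ L₂ M : ℝ) (hL₁ : 0 < L₁) (hL₂ : 0 < L₂) (hM : 0 < M)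
    (hbound : ∀ κ x b, ‖f κ x b‖ ≤ M)
    (hLip1 : ∀ κ x b b', ‖f κ x b - f κ x b'‖ ≤
      L₁ * Real.sqrt (∑ j ∈ nbrFinset E κ, ‖b j - b' j‖ ^ 2))
    (hLip2 : ∀ κ x x' b, ‖f κ x b - f κ x' b‖ ≤ L₂ * ‖x - x'‖)
    (Nmax : ℕ) (hNmax : Nmax = Finset.univ.sup fun κ => (nbrFinset E κ).card)
    (hNmax1 : 1 ≤ Nmax)
    (m : ℕ) (hm : 1 ≤ m)
    (xGi xGl : Fin Nv → EuclideanSpace ℝ (Fin n))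
    (i ℓ : Fin Nv) (hℓ : ℓ ∈ nbr E i)
    (hagree : ∀ κ ∈ nbar E i m ∩ nbar E ℓ m, xGi κ = xGl κ)
    (χi χl : Fin Nv → ℝ → EuclideanSpace ℝ (Fin n))
    (hIVPi :
      (nset E i (m + 1) = ∅ →
        (∀ κ ∈ nbar E i m, χi κ 0 = xGi κ) ∧
        (∀ κ ∈ nbar E i m, ∀ t ∈ Set.Ici (0:ℝ),
          HasDerivWithinAt (χi κ) (f κ (χi κ t) (fun j => χi j t)) (Set.Ici 0) t)) ∧
      (nset E i (m + 1) ≠ ∅ →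
        (∀ κ ∈ nbar E i (m - 1), χi κ 0 = xGi κ) ∧
        (∀ κ ∈ nbar E i (m - 1), ∀ t ∈ Set.Ici (0:ℝ),
          HasDerivWithinAt (χi κ) (f κ (χi κ t) (fun j => χi j t)) (Set.Ici 0) t) ∧
        (∀ κ ∈ nset E i m, ∀ t : ℝ, χi κ t = xGi κ)))
    (hIVPl :
      (nset E ℓ (m + 1) = ∅ →
        (∀ κ ∈ nbar E ℓ m, χl κ 0 = xGl κ) ∧
        (∀ κ ∈ nbar E ℓ m, ∀ t ∈ Set.Ici (0:ℝ),
          HasDerivWithinAt (χl κ) (f κ (χl κ t) (fun j => χl j t)) (Set.Ici 0) t)) ∧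
      (nset E ℓ (m + 1) ≠ ∅ →
        (∀ κ ∈ nbar E ℓ (m - 1), χl κ 0 = xGl κ) ∧
        (∀ κ ∈ nbar E ℓ (m - 1), ∀ t ∈ Set.Ici (0:ℝ),
          HasDerivWithinAt (χl κ) (f κ (χl κ t) (fun j => χl j t)) (Set.Ici 0) t) ∧
        (∀ κ ∈ nset E ℓ m, ∀ t : ℝ, χl κ t = xGl κ)))
    (tstar : ℝ) (htpos : 0 < tstar)
    (hroot : Real.exp (L₂ * tstar)
      - (L₂ + L₂ ^ 2 / (L₁ * Real.sqrt (Nmax : ℝ))) * tstar - 1 = 0) :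
    ∀ κ ∈ nbar E ℓ (m - 1), ∀ t ∈ Set.Icc (0:ℝ) tstar,
      ‖χi κ t - χl κ t‖ ≤ M * t := by
  have hcard : ∀ κ, (nbrFinset E κ).card ≤ Nmax := fun κ =>
    hNmax ▸ Finset.le_sup (f := fun κ => (nbrFinset E κ).card) (Finset.mem_univ κ)
  have hi : FrozenOrSolvingOn E f (nbar E i m) xGi χi :=
    IsReferenceTrajectory.frozenOrSolvingOn hIVPi hm
  have hl : FrozenOrSolvingOn E f (nbar E ℓ m) xGl χl :=
    IsReferenceTrajectory.frozenOrSolvingOn hIVPl hm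
  have hsub : nbar E ℓ (m - 1) ⊆ nbar E i m ∩ nbar E ℓ m := fun κ hκ =>
    ⟨Nat.sub_add_cancel hm ▸ nbar_subset_nbar_succ_of_mem_nbr hℓ hκ, nbar_mono (m.sub_le 1) hκ⟩
  intro κ hκ
  exact hi.norm_sub_le_mul hl hagree hL₁ hL₂ hM.le hNmax1 hbound hLip1 hLip2 hcard htpos hroot κ
    (hsub hκ)
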